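/- Let (ρ₁,ρ₂) be density matrices on ℂ^n and (ρ₁′,ρ₂′) be density matrices on ℂ^m with ρ₁′ ≠ ρ₂′ and supp(ρ₁′) ⊆ supp(ρ₂′). Set M′ := inf{ λ : λρ₂′ − ρ₁′ ≥ 0 } and m′ := sup{ λ : ρ₁′ − λρ₂′ ≥ 0 } (so m′ < 1 < M′ < ∞). Define the 2×2 diagonal density matrices σ₁ := (1/(M′−m′))·diag(M′(1−m′), m′(M′−1)) and σ₂ := (1/(M′−m′))·diag(1−m′, M′−1). Then there exists a test-and-prepare channel ℰ(ρ) = Tr[Eρ]·ξ₁ + Tr[(𝟙−E)ρ]·ξ₂ (for some 0 ≤ E ≤ 𝟙ₙ and density matrices ξ₁, ξ₂ on ℂ^m) with ℰ(ρ₁) = ρ₁′ and ℰ(ρ₂) = ρ₂′ if and only if ‖ρ₁ − tρ₂‖₁ ≥ ‖σ₁ − tσ₂‖₁ for all t ≥ 0. -/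

import Mathlib

/-!
A test-and-prepare channel with test `E` is determined by the point `(x, y) = (Tr[E ρ₁], Tr[E ρ₂])`
of the testing region of `(ρ₁, ρ₂)`: for `x ≠ y` the prepared states are forced, and they are
positive exactly when `x - M' y ≥ 0` and `x - m' y ≥ 1 - m'`. This wedge has its apex at
`(p, q) = ((σ₁)₁₁, (σ₂)₁₁)`. The testing region is compact and convex, so by separation it meets
the wedge iff for every `t ∈ [m', M']` the functional `x - t y` reaches `p - t q` on it. By the
Helstrom bound the maximum of `x - t y` over the testing region is `(‖ρ₁ - t ρ₂‖₁ + 1 - t) / 2`,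
while `‖σ₁ - t σ₂‖₁` equals `2 (p - t q) - (1 - t)` on `[m', M']` and `|1 - t|` elsewhere.
-/

open scoped ComplexOrder

/-- The positive semidefinite square root of a positive semidefinite matrix
(the definition Mathlib had, removed since). -/
noncomputable def Matrix.PosSemidef.sqrt {n : Type*} [Fintype n] [DecidableEq n]
    {A : Matrix n n ℂ} (hA : A.PosSemidef) : Matrix n n ℂ :=
  hA.1.eigenvectorUnitary.1 * Matrix.diagonal ((↑) ∘ (√·) ∘ hA.1.eigenvalues) *
  (star hA.1.eigenvectorUnitary : Matrix n n ℂ)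

/-- The trace norm of a matrix, `‖A‖₁ = Tr[√(AᴴA)]`. -/
noncomputable def traceNorm {n : ℕ} (A : Matrix (Fin n) (Fin n) ℂ) : ℝ :=
  ((Matrix.posSemidef_conjTranspose_mul_self A).sqrt).trace.re

/-- `sup(A/B) = inf { λ : λB - A ≥ 0 }`. -/
noncomputable def supRatio {k : ℕ} (A B : Matrix (Fin k) (Fin k) ℂ) : ℝ :=
  sInf { lam : ℝ | ((lam : ℂ) • B - A).PosSemidef }

/-- `inf(A/B) = sup { λ : A - λB ≥ 0 }`. -/
noncomputable def infRatio {k : ℕ} (A B : Matrix (Fin k) (Fin k) ℂ) : ℝ :=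
  sSup { lam : ℝ | (A - (lam : ℂ) • B).PosSemidef }

open scoped MatrixOrder
open Matrix Set

namespace Matrix

variable {ι : Type*} [Fintype ι] [DecidableEq ι]

lemma PosSemidef.sqrt_eq_cfcSqrt {A : Matrix ι ι ℂ} (hA : A.PosSemidef) :
    hA.sqrt = CFC.sqrt A := by
  have : 0 ≤ A := hA.nonneg
  rw [CFC.sqrt_eq_real_sqrt A, cfcₙ_eq_cfc, hA.1.cfc_eq, IsHermitian.cfc,
    Unitary.conjStarAlgAut_apply]
  rfl

lemma PosSemidef.trace_mul_nonneg {𝕜 : Type*} [RCLike 𝕜] {A B : Matrix ι ι 𝕜}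
    (hA : A.PosSemidef) (hB : B.PosSemidef) : 0 ≤ (A * B).trace := by
  obtain ⟨C, rfl⟩ := CStarAlgebra.nonneg_iff_eq_star_mul_self.mp hA.nonneg
  rw [Matrix.mul_assoc, trace_mul_comm, star_eq_conjTranspose]
  exact (hB.mul_mul_conjTranspose_same C).trace_nonneg

lemma PosSemidef.trace_mul_eq_ofReal_re {A B : Matrix ι ι ℂ} (hA : A.PosSemidef)
    (hB : B.PosSemidef) : (A * B).trace = ((A * B).trace.re : ℂ) :=
  Complex.eq_re_of_ofReal_le (r := 0) (by rw [Complex.ofReal_zero]; exact hA.trace_mul_nonneg hB)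

lemma re_trace_mul_nonneg {E P : Matrix ι ι ℂ} (hE : 0 ≤ E) (hP : 0 ≤ P) :
    0 ≤ (E * P).trace.re :=
  (Complex.nonneg_iff.mp (hE.posSemidef.trace_mul_nonneg hP.posSemidef)).1

lemma re_trace_mul_le_re_trace {E P : Matrix ι ι ℂ} (hE : E ≤ 1) (hP : 0 ≤ P) :
    (E * P).trace.re ≤ P.trace.re := by
  have := re_trace_mul_nonneg (sub_nonneg.mpr hE) hP
  rwa [Matrix.sub_mul, Matrix.one_mul, trace_sub, Complex.sub_re, sub_nonneg] at this

lemma re_trace_mul_le_re_trace_posPart {E A : Matrix ι ι ℂ} (hE : E ∈ Icc 0 1)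
    (hA : A.IsHermitian) : (E * A).trace.re ≤ (A⁺).trace.re := by
  have : IsSelfAdjoint A := hA
  have hneg := re_trace_mul_nonneg hE.1 (CFC.negPart_nonneg A)
  have hpos := re_trace_mul_le_re_trace hE.2 (CFC.posPart_nonneg A)
  conv_lhs => rw [← CFC.posPart_sub_negPart A]
  rw [Matrix.mul_sub, trace_sub, Complex.sub_re]
  linarith

lemma exists_mem_Icc_re_trace_mul_eq_re_trace_posPart {A : Matrix ι ι ℂ} (hA : A.IsHermitian) :
    ∃ E ∈ Icc (0 : Matrix ι ι ℂ) 1, (E * A).trace.re = (A⁺).trace.re := by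
  have : IsSelfAdjoint A := hA
  have hcont (f : ℝ → ℝ) : ContinuousOn f (spectrum ℝ A) := A.finite_real_spectrum.continuousOn f
  refine ⟨cfc ((Ici (0 : ℝ)).indicator 1) A,
    ⟨cfc_nonneg fun x _ => ?_, cfc_le_one _ _ fun x _ => ?_⟩, ?_⟩
  · exact indicator_nonneg (fun _ _ => zero_le_one) x
  · exact indicator_le_self' (fun _ _ => zero_le_one) x
  · congr 2
    nth_rw 2 [← cfc_id' ℝ A]
    rw [CFC.posPart_def, cfcₙ_eq_cfc, ← cfc_mul _ _ _ (hcont _) (hcont _)]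
    refine cfc_congr fun x _ => ?_
    by_cases hx : 0 ≤ x
    · simp [hx]
    · simp [hx, posPart_of_nonpos (le_of_not_ge hx)]

open scoped Matrix.Norms.L2Operator in
lemma isClosed_setOf_posSemidef : IsClosed {A : Matrix ι ι ℂ | A.PosSemidef} := by
  convert isClosed_Ici (a := (0 : Matrix ι ι ℂ))
  ext A
  exact nonneg_iff_posSemidef.symm

open scoped Matrix.Norms.L2Operator in
lemma isCompact_Icc_zero_one : IsCompact (Icc (0 : Matrix ι ι ℂ) 1) :=
  Metric.isCompact_of_isClosed_isBounded isClosed_Icc <|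
    Metric.isBounded_closedBall.subset fun _ hE =>
      mem_closedBall_zero_iff.mpr (CStarAlgebra.mem_Icc_iff_norm_le_one.mp hE).2

lemma exists_eq_mul_of_range_le {κ μ ν R : Type*} [Fintype μ] [DecidableEq μ] [Fintype ν]
    [DecidableEq ν] [CommRing R] {A : Matrix κ μ R} {B : Matrix κ ν R}
    (h : LinearMap.range (toLin' A) ≤ LinearMap.range (toLin' B)) :
    ∃ W : Matrix ν μ R, A = B * W := by
  choose w hw using fun j => h ⟨Pi.single j 1, rfl⟩
  refine ⟨(of w)ᵀ, ext fun i j => ?_⟩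
  have := congrFun (hw j) i
  simp only [toLin'_apply, mulVec_single_one] at this
  simpa [mul_apply, mulVec, dotProduct] using this.symm

/-- `P = cfc (x * x⁻¹) B` is the support projection of `B` (as `0⁻¹ = 0`). The range condition
gives `A = P A P`, hence `A ≤ a P ≤ a c B` for `a` bounding the spectrum of `A` and `c` bounding
the inverses of the positive eigenvalues of `B`. -/
lemma exists_le_smul_of_range_le {A B : Matrix ι ι ℂ} (hA : 0 ≤ A) (hB : 0 ≤ B)
    (h : LinearMap.range (toLin' A) ≤ LinearMap.range (toLin' B)) : ∃ c : ℝ, A ≤ c • B := by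
  obtain ⟨W, rfl⟩ := exists_eq_mul_of_range_le h
  have hcont (f : ℝ → ℝ) : ContinuousOn f (spectrum ℝ B) := B.finite_real_spectrum.continuousOn f
  set P := cfc (fun x : ℝ => x * x⁻¹) B with hPdef
  have hP : 0 ≤ P := cfc_nonneg fun x hx => by
    have := spectrum_nonneg_of_nonneg hB hx
    positivity
  have hPP : P * P = P := by
    rw [hPdef, ← cfc_mul _ _ _ (hcont _) (hcont _)]
    exact cfc_congr fun x _ => by by_cases hx : x = 0 <;> simp [hx]
  have hPB : P * B = B := by
    rw [hPdef]
    nth_rw 2 [← cfc_id' ℝ B]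
    rw [← cfc_mul _ _ _ (hcont _) (hcont _)]
    exact (cfc_congr fun x _ => mul_inv_mul_cancel x).trans (cfc_id' ℝ B)
  obtain ⟨c₁, hc₁⟩ := (B.finite_real_spectrum.image (·⁻¹)).bddAbove
  obtain ⟨c₂, hc₂⟩ := (B * W).finite_real_spectrum.bddAbove
  have hPle : P ≤ c₁ • B := by
    rw [hPdef, ← cfc_const_mul_id c₁ B]
    refine cfc_mono (hf := hcont _) fun x hx => ?_
    rcases (spectrum_nonneg_of_nonneg hB hx).eq_or_lt with rfl | hx0
    · simp
    · rw [mul_inv_cancel₀ hx0.ne', ← div_le_iff₀ hx0, one_div]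
      exact hc₁ ⟨x, hx, rfl⟩
  have hAle : B * W ≤ algebraMap ℝ _ |c₂| :=
    le_algebraMap_of_spectrum_le fun x hx => (hc₂ hx).trans (le_abs_self c₂)
  have hPA : P * (B * W) = B * W := by rw [← Matrix.mul_assoc, hPB]
  have hAP : B * W * P = B * W := by
    simpa only [star_mul, (IsSelfAdjoint.of_nonneg hA).star_eq,
      (IsSelfAdjoint.of_nonneg hP).star_eq] using congrArg star hPA
  refine ⟨|c₂| * c₁, ?_⟩
  calc B * W = P * (B * W) * P := by rw [hPA, hAP]
    _ ≤ P * algebraMap ℝ _ |c₂| * P := conjugate_le_conjugate_of_nonneg hAle hP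
    _ = |c₂| • P := by rw [Algebra.algebraMap_eq_smul_one, mul_smul_one, smul_mul_assoc, hPP]
    _ ≤ |c₂| • c₁ • B := smul_le_smul_of_nonneg_left hPle (abs_nonneg _)
    _ = (|c₂| * c₁) • B := smul_smul _ _ _

end Matrix

section TraceNorm

variable {k : ℕ}

lemma traceNorm_eq_re_trace_cfcAbs (A : Matrix (Fin k) (Fin k) ℂ) :
    traceNorm A = (CFC.abs A).trace.re := by
  rw [traceNorm, PosSemidef.sqrt_eq_cfcSqrt]
  rfl

lemma traceNorm_diagonal (d : Fin k → ℝ) :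
    traceNorm (diagonal fun i => (d i : ℂ)) = ∑ i, |d i| := by
  have habs : CFC.abs (diagonal fun i => (d i : ℂ)) = diagonal fun i => ((|d i| : ℝ) : ℂ) := by
    refine CFC.sqrt_unique ?_ (PosSemidef.diagonal fun i => by simp).nonneg
    simp [diagonal_mul_diagonal, star_eq_conjTranspose, diagonal_conjTranspose,
      ← Complex.ofReal_mul]
  rw [traceNorm_eq_re_trace_cfcAbs, habs, trace_diagonal, ← Complex.ofReal_sum,
    Complex.ofReal_re]

lemma traceNorm_eq_two_mul_re_trace_posPart_sub {A : Matrix (Fin k) (Fin k) ℂ}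
    (hA : A.IsHermitian) : traceNorm A = 2 * (A⁺).trace.re - A.trace.re := by
  have : IsSelfAdjoint A := hA
  have h := congrArg (fun B => B.trace.re) (CFC.abs_add_self A)
  simp only [two_nsmul, trace_add, Complex.add_re] at h
  rw [traceNorm_eq_re_trace_cfcAbs]
  linarith

lemma abs_re_trace_le_traceNorm {A : Matrix (Fin k) (Fin k) ℂ} (hA : A.IsHermitian) :
    |A.trace.re| ≤ traceNorm A := by
  have : IsSelfAdjoint A := hA
  have hpos : 0 ≤ (A⁺).trace.re := by
    simpa using re_trace_mul_nonneg PosSemidef.one.nonneg (CFC.posPart_nonneg A)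
  have hle : A.trace.re ≤ (A⁺).trace.re := by
    simpa using re_trace_mul_le_re_trace_posPart ⟨PosSemidef.one.nonneg, le_rfl⟩ hA
  rw [traceNorm_eq_two_mul_re_trace_posPart_sub hA, abs_le]
  constructor <;> linarith

lemma traceNorm_diagonal_sub_smul_diagonal (a₁ a₂ b₁ b₂ t : ℝ) :
    traceNorm (diagonal ![(a₁ : ℂ), (a₂ : ℂ)] - (t : ℂ) • diagonal ![(b₁ : ℂ), (b₂ : ℂ)]) =
      |a₁ - t * b₁| + |a₂ - t * b₂| := by
  have : diagonal ![(a₁ : ℂ), (a₂ : ℂ)] - (t : ℂ) • diagonal ![(b₁ : ℂ), (b₂ : ℂ)] =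
      diagonal fun i => ((![a₁ - t * b₁, a₂ - t * b₂] i : ℝ) : ℂ) := by
    ext i j
    fin_cases i <;> fin_cases j <;> simp
  rw [this, traceNorm_diagonal, Fin.sum_univ_two]
  rfl

end TraceNorm

section Ratio

variable {κ : Type*} [Fintype κ]

lemma one_le_of_smul_sub_posSemidef {A B : Matrix κ κ ℂ} (hAtr : A.trace = 1)
    (hBtr : B.trace = 1) {c : ℝ} (h : ((c : ℂ) • B - A).PosSemidef) : 1 ≤ c := by
  have := (Complex.nonneg_iff.mp h.trace_nonneg).1
  simp only [trace_sub, trace_smul, hAtr, hBtr, smul_eq_mul, mul_one, Complex.sub_re,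
    Complex.ofReal_re, Complex.one_re] at this
  linarith

lemma le_one_of_sub_smul_posSemidef {A B : Matrix κ κ ℂ} (hAtr : A.trace = 1)
    (hBtr : B.trace = 1) {c : ℝ} (h : (A - (c : ℂ) • B).PosSemidef) : c ≤ 1 := by
  have := (Complex.nonneg_iff.mp h.trace_nonneg).1
  simp only [trace_sub, trace_smul, hAtr, hBtr, smul_eq_mul, mul_one, Complex.sub_re,
    Complex.ofReal_re, Complex.one_re] at this
  linarith

lemma eq_of_sub_posSemidef_of_trace_eq {A B : Matrix κ κ ℂ} (h : (B - A).PosSemidef)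
    (htr : A.trace = B.trace) : A = B :=
  (sub_eq_zero.mp ((h.trace_eq_zero_iff).mp (by rw [trace_sub, htr, sub_self]))).symm

lemma isClosed_setOf_smul_sub_posSemidef [DecidableEq κ] (A B : Matrix κ κ ℂ) :
    IsClosed {c : ℝ | ((c : ℂ) • B - A).PosSemidef} :=
  isClosed_setOf_posSemidef.preimage (by fun_prop)

lemma isClosed_setOf_sub_smul_posSemidef [DecidableEq κ] (A B : Matrix κ κ ℂ) :
    IsClosed {c : ℝ | (A - (c : ℂ) • B).PosSemidef} :=
  isClosed_setOf_posSemidef.preimage (by fun_prop)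

lemma one_lt_of_isLeast {A B : Matrix κ κ ℂ} {M : ℝ}
    (hM : IsLeast {c : ℝ | ((c : ℂ) • B - A).PosSemidef} M) (hAtr : A.trace = 1)
    (hBtr : B.trace = 1) (hne : A ≠ B) : 1 < M := by
  refine (one_le_of_smul_sub_posSemidef hAtr hBtr hM.1).lt_of_ne fun h => hne ?_
  have h1 := hM.1
  rw [Set.mem_ofPred_eq, ← h, Complex.ofReal_one, one_smul] at h1
  exact eq_of_sub_posSemidef_of_trace_eq h1 (hAtr.trans hBtr.symm)

lemma lt_one_of_isGreatest {A B : Matrix κ κ ℂ} {m : ℝ}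
    (hm : IsGreatest {c : ℝ | (A - (c : ℂ) • B).PosSemidef} m) (hAtr : A.trace = 1)
    (hBtr : B.trace = 1) (hne : A ≠ B) : m < 1 := by
  refine (le_one_of_sub_smul_posSemidef hAtr hBtr hm.1).lt_of_ne fun h => hne ?_
  have h1 := hm.1
  rw [Set.mem_ofPred_eq, h, Complex.ofReal_one, one_smul] at h1
  exact (eq_of_sub_posSemidef_of_trace_eq h1 (hBtr.trans hAtr.symm)).symm

lemma smul_sub_smul_posSemidef_iff_of_isLeast {A B : Matrix κ κ ℂ} {M : ℝ}
    (hM : IsLeast {c : ℝ | ((c : ℂ) • B - A).PosSemidef} M) (hB : B.PosSemidef)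
    (hBtr : B.trace = 1) {x y : ℝ} (hy : 0 ≤ y) :
    ((x : ℂ) • B - (y : ℂ) • A).PosSemidef ↔ M * y ≤ x := by
  constructor
  · intro h
    rcases hy.eq_or_lt with rfl | hy
    · have := (Complex.nonneg_iff.mp h.trace_nonneg).1
      simpa [hBtr] using this
    · have hxy : (((x / y : ℝ) : ℂ) • B - A).PosSemidef := by
        convert h.smul (Complex.zero_le_real.mpr (inv_nonneg.mpr hy.le)) using 1
        have : (y : ℂ) ≠ 0 := by exact_mod_cast hy.ne'
        rw [smul_sub, smul_smul, smul_smul]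
        match_scalars <;> field_simp
      have := hM.2 hxy
      rwa [le_div_iff₀ hy] at this
  · intro h
    have hsplit : (x : ℂ) • B - (y : ℂ) • A =
        (y : ℂ) • ((M : ℂ) • B - A) + ((x - M * y : ℝ) : ℂ) • B := by
      push_cast
      module
    rw [hsplit]
    exact (hM.1.smul (Complex.zero_le_real.mpr hy)).add
      (hB.smul (Complex.zero_le_real.mpr (sub_nonneg.mpr h)))

lemma smul_sub_smul_posSemidef_iff_of_isGreatest {A B : Matrix κ κ ℂ} {m : ℝ}
    (hm : IsGreatest {c : ℝ | (A - (c : ℂ) • B).PosSemidef} m) (hB : B.PosSemidef)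
    (hBtr : B.trace = 1) {c d : ℝ} (hc : 0 ≤ c) :
    ((c : ℂ) • A - (d : ℂ) • B).PosSemidef ↔ d ≤ m * c := by
  constructor
  · intro h
    rcases hc.eq_or_lt with rfl | hc
    · have := (Complex.nonneg_iff.mp h.trace_nonneg).1
      simpa [hBtr] using this
    · have hdc : (A - ((d / c : ℝ) : ℂ) • B).PosSemidef := by
        convert h.smul (Complex.zero_le_real.mpr (inv_nonneg.mpr hc.le)) using 1
        have : (c : ℂ) ≠ 0 := by exact_mod_cast hc.ne'
        rw [smul_sub, smul_smul, smul_smul]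
        match_scalars <;> field_simp
      have := hm.2 hdc
      rwa [div_le_iff₀ hc] at this
  · intro h
    have hsplit : (c : ℂ) • A - (d : ℂ) • B =
        (c : ℂ) • (A - (m : ℂ) • B) + ((m * c - d : ℝ) : ℂ) • B := by
      push_cast
      module
    rw [hsplit]
    exact (hm.1.smul (Complex.zero_le_real.mpr hc)).add
      (hB.smul (Complex.zero_le_real.mpr (sub_nonneg.mpr h)))

variable {k : ℕ} {A B : Matrix (Fin k) (Fin k) ℂ}

lemma isLeast_supRatio (hA : A.PosSemidef) (hAtr : A.trace = 1) (hB : B.PosSemidef)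
    (hBtr : B.trace = 1) (hAB : LinearMap.range (toLin' A) ≤ LinearMap.range (toLin' B)) :
    IsLeast {c : ℝ | ((c : ℂ) • B - A).PosSemidef} (supRatio A B) := by
  obtain ⟨c, hc⟩ := exists_le_smul_of_range_le hA.nonneg hB.nonneg hAB
  refine (isClosed_setOf_smul_sub_posSemidef A B).isLeast_csInf ⟨c, ?_⟩
    ⟨1, fun _ hc => one_le_of_smul_sub_posSemidef hAtr hBtr hc⟩
  rwa [Set.mem_ofPred_eq, Complex.coe_smul, ← le_iff]

lemma isGreatest_infRatio (hA : A.PosSemidef) (hAtr : A.trace = 1) (hBtr : B.trace = 1) :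
    IsGreatest {c : ℝ | (A - (c : ℂ) • B).PosSemidef} (infRatio A B) :=
  (isClosed_setOf_sub_smul_posSemidef A B).isGreatest_csSup ⟨0, by simpa using hA⟩
    ⟨1, fun _ hc => le_one_of_sub_smul_posSemidef hAtr hBtr hc⟩

end Ratio

section TestingRegion

variable {ι : Type*} [Fintype ι] [DecidableEq ι]

def testingRegion (ρ₁ ρ₂ : Matrix ι ι ℂ) : Set (ℝ × ℝ) :=
  (fun E => ((E * ρ₁).trace.re, (E * ρ₂).trace.re)) '' Icc 0 1

lemma convex_testingRegion (ρ₁ ρ₂ : Matrix ι ι ℂ) : Convex ℝ (testingRegion ρ₁ ρ₂) :=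
  (convex_Icc 0 1).is_linear_image
    ⟨fun E F => by simp [Matrix.add_mul], fun c E => by simp [trace_smul]⟩

lemma isCompact_testingRegion (ρ₁ ρ₂ : Matrix ι ι ℂ) : IsCompact (testingRegion ρ₁ ρ₂) :=
  isCompact_Icc_zero_one.image (by fun_prop)

lemma exists_mem_testingRegion_le_iff {k : ℕ} {ρ₁ ρ₂ : Matrix (Fin k) (Fin k) ℂ}
    (hρ₁ : ρ₁.IsHermitian) (hρ₁tr : ρ₁.trace = 1) (hρ₂ : ρ₂.IsHermitian) (hρ₂tr : ρ₂.trace = 1)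
    (c t : ℝ) :
    (∃ z ∈ testingRegion ρ₁ ρ₂, c ≤ z.1 - t * z.2) ↔
      2 * c - (1 - t) ≤ traceNorm (ρ₁ - (t : ℂ) • ρ₂) := by
  have hA : (ρ₁ - (t : ℂ) • ρ₂).IsHermitian := hρ₁.sub (hρ₂.smul (Complex.conj_ofReal t))
  have hpair (E : Matrix (Fin k) (Fin k) ℂ) :
      (E * (ρ₁ - (t : ℂ) • ρ₂)).trace.re = (E * ρ₁).trace.re - t * (E * ρ₂).trace.re := by
    simp [Matrix.mul_sub, trace_sub, trace_smul]
  have htr : (ρ₁ - (t : ℂ) • ρ₂).trace.re = 1 - t := by simp [trace_sub, trace_smul, hρ₁tr, hρ₂tr]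
  rw [traceNorm_eq_two_mul_re_trace_posPart_sub hA, htr]
  constructor
  · rintro ⟨_, ⟨E, hE, rfl⟩, h⟩
    have := re_trace_mul_le_re_trace_posPart hE hA
    rw [hpair] at this
    linarith
  · intro h
    obtain ⟨E, hE, hEA⟩ := exists_mem_Icc_re_trace_mul_eq_re_trace_posPart hA
    refine ⟨_, ⟨E, hE, rfl⟩, ?_⟩
    rw [hpair] at hEA
    dsimp only
    linarith

end TestingRegion

section Channel

lemma smul_add_one_sub_smul_eq_and_iff {𝕜 V : Type*} [Field 𝕜] [AddCommGroup V] [Module 𝕜 V]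
    {x y : 𝕜} (hxy : x ≠ y) {ξ₁ ξ₂ a b : V} :
    (x • ξ₁ + (1 - x) • ξ₂ = a ∧ y • ξ₁ + (1 - y) • ξ₂ = b) ↔
      ((x - y) • ξ₁ = (1 - y) • a - (1 - x) • b ∧ (x - y) • ξ₂ = x • b - y • a) := by
  constructor
  · rintro ⟨rfl, rfl⟩
    constructor <;> module
  · rintro ⟨h₁, h₂⟩
    have hxy : x - y ≠ 0 := sub_ne_zero.mpr hxy
    constructor <;> apply smul_right_injective V hxy
    · linear_combination (norm := module) x • h₁ + (1 - x) • h₂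
    · linear_combination (norm := module) y • h₁ + (1 - y) • h₂

variable {κ : Type*} [Fintype κ]

lemma exists_states_mix_iff {A B : Matrix κ κ ℂ} {M m : ℝ}
    (hM : IsLeast {c : ℝ | ((c : ℂ) • B - A).PosSemidef} M)
    (hm : IsGreatest {c : ℝ | (A - (c : ℂ) • B).PosSemidef} m)
    (hAtr : A.trace = 1) (hB : B.PosSemidef) (hBtr : B.trace = 1)
    {x y : ℝ} (hy : 0 ≤ y) (hyx : y < x) (hx : x ≤ 1) :
    (∃ ξ₁ ξ₂ : Matrix κ κ ℂ, ξ₁.PosSemidef ∧ ξ₁.trace = 1 ∧ ξ₂.PosSemidef ∧ ξ₂.trace = 1 ∧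
        (x : ℂ) • ξ₁ + (1 - (x : ℂ)) • ξ₂ = A ∧ (y : ℂ) • ξ₁ + (1 - (y : ℂ)) • ξ₂ = B) ↔
      0 ≤ x - M * y ∧ 1 - m ≤ x - m * y := by
  have hxy : (x : ℂ) ≠ y := by exact_mod_cast hyx.ne'
  have hd : (0 : ℂ) ≤ (x : ℂ) - y := by exact_mod_cast sub_nonneg.mpr hyx.le
  have hξ₂ := smul_sub_smul_posSemidef_iff_of_isLeast hM hB hBtr hy (x := x)
  have hξ₁ := smul_sub_smul_posSemidef_iff_of_isGreatest hm hB hBtr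
    (sub_nonneg.mpr (hyx.trans_le hx).le) (d := 1 - x)
  push_cast at hξ₁
  rw [sub_nonneg]
  constructor
  · rintro ⟨ξ₁, ξ₂, hξ₁psd, -, hξ₂psd, -, hmix⟩
    rw [smul_add_one_sub_smul_eq_and_iff hxy] at hmix
    refine ⟨hξ₂.mp (hmix.2 ▸ hξ₂psd.smul hd), ?_⟩
    have := hξ₁.mp (hmix.1 ▸ hξ₁psd.smul hd)
    linarith
  · rintro ⟨h₂, h₁⟩
    have hinv : (0 : ℂ) ≤ ((x : ℂ) - y)⁻¹ := inv_nonneg.mpr hd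
    refine ⟨((x : ℂ) - y)⁻¹ • ((1 - (y : ℂ)) • A - (1 - (x : ℂ)) • B),
      ((x : ℂ) - y)⁻¹ • ((x : ℂ) • B - (y : ℂ) • A),
      (hξ₁.mpr (by linarith)).smul hinv, ?_, (hξ₂.mpr h₂).smul hinv, ?_, ?_⟩
    · simp only [trace_smul, trace_sub, hAtr, hBtr, smul_eq_mul, mul_one]
      field_simp [sub_ne_zero.mpr hxy]
      ring
    · simp only [trace_smul, trace_sub, hAtr, hBtr, smul_eq_mul, mul_one]
      field_simp [sub_ne_zero.mpr hxy]
    · rw [smul_add_one_sub_smul_eq_and_iff hxy, smul_inv_smul₀ (sub_ne_zero.mpr hxy),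
        smul_inv_smul₀ (sub_ne_zero.mpr hxy)]
      exact ⟨rfl, rfl⟩

variable {ι : Type*} [Fintype ι] [DecidableEq ι]

lemma trace_mul_smul_add_trace_one_sub_mul_smul {V : Type*} [AddCommGroup V] [Module ℂ V]
    {E ρ : Matrix ι ι ℂ} (hE : 0 ≤ E) (hρ : ρ.PosSemidef) (hρtr : ρ.trace = 1) (ξ₁ ξ₂ : V) :
    (E * ρ).trace • ξ₁ + ((1 - E) * ρ).trace • ξ₂ =
      ((E * ρ).trace.re : ℂ) • ξ₁ + (1 - ((E * ρ).trace.re : ℂ)) • ξ₂ := by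
  rw [Matrix.sub_mul, Matrix.one_mul, trace_sub, hρtr, ← hE.posSemidef.trace_mul_eq_ofReal_re hρ]

lemma re_trace_mul_mem_Icc {E ρ : Matrix ι ι ℂ} (hE : E ∈ Icc 0 1) (hρ : ρ.PosSemidef)
    (hρtr : ρ.trace = 1) : (E * ρ).trace.re ∈ Icc (0 : ℝ) 1 :=
  ⟨re_trace_mul_nonneg hE.1 hρ.nonneg, by
    simpa [hρtr] using re_trace_mul_le_re_trace hE.2 hρ.nonneg⟩

/-- Replacing the test `E` by `𝟙 - E` (and swapping `ξ₁`, `ξ₂`) lets one assume that the first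
outcome is more likely under `ρ₁`; it cannot be equally likely, as `ρ₁' ≠ ρ₂'`. -/
lemma exists_testAndPrepare_iff_exists_mem_testingRegion {ρ₁ ρ₂ : Matrix ι ι ℂ}
    {ρ₁' ρ₂' : Matrix κ κ ℂ}
    (hρ₁ : ρ₁.PosSemidef) (hρ₁tr : ρ₁.trace = 1) (hρ₂ : ρ₂.PosSemidef) (hρ₂tr : ρ₂.trace = 1)
    (hρ₁'tr : ρ₁'.trace = 1) (hρ₂' : ρ₂'.PosSemidef) (hρ₂'tr : ρ₂'.trace = 1) (hne : ρ₁' ≠ ρ₂')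
    {M m : ℝ} (hM : IsLeast {c : ℝ | ((c : ℂ) • ρ₂' - ρ₁').PosSemidef} M)
    (hm : IsGreatest {c : ℝ | (ρ₁' - (c : ℂ) • ρ₂').PosSemidef} m) :
    (∃ (E : Matrix ι ι ℂ) (ξ₁ ξ₂ : Matrix κ κ ℂ),
        E.PosSemidef ∧ ((1 : Matrix ι ι ℂ) - E).PosSemidef ∧
        ξ₁.PosSemidef ∧ ξ₁.trace = 1 ∧ ξ₂.PosSemidef ∧ ξ₂.trace = 1 ∧
        (E * ρ₁).trace • ξ₁ + (((1 : Matrix ι ι ℂ) - E) * ρ₁).trace • ξ₂ = ρ₁' ∧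
        (E * ρ₂).trace • ξ₁ + (((1 : Matrix ι ι ℂ) - E) * ρ₂).trace • ξ₂ = ρ₂') ↔
      ∃ z ∈ testingRegion ρ₁ ρ₂, 0 ≤ z.1 - M * z.2 ∧ 1 - m ≤ z.1 - m * z.2 := by
  have hM1 := one_lt_of_isLeast hM hρ₁'tr hρ₂'tr hne
  have hm1 := lt_one_of_isGreatest hm hρ₁'tr hρ₂'tr hne
  have hmix {x y : ℝ} := exists_states_mix_iff hM hm hρ₁'tr hρ₂' hρ₂'tr (x := x) (y := y)
  constructor
  · rintro ⟨E, ξ₁, ξ₂, hE, hE1, hξ₁, hξ₁tr, hξ₂, hξ₂tr, h₁, h₂⟩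
    have hEI : E ∈ Icc (0 : Matrix ι ι ℂ) 1 := ⟨hE.nonneg, hE1⟩
    rw [trace_mul_smul_add_trace_one_sub_mul_smul hEI.1 hρ₁ hρ₁tr] at h₁
    rw [trace_mul_smul_add_trace_one_sub_mul_smul hEI.1 hρ₂ hρ₂tr] at h₂
    obtain ⟨hx0, hx1⟩ := re_trace_mul_mem_Icc hEI hρ₁ hρ₁tr
    obtain ⟨hy0, hy1⟩ := re_trace_mul_mem_Icc hEI hρ₂ hρ₂tr
    rcases lt_trichotomy (E * ρ₂).trace.re (E * ρ₁).trace.re with hyx | hxy | hxy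
    · exact ⟨_, ⟨E, hEI, rfl⟩,
        (hmix hy0 hyx hx1).mp ⟨ξ₁, ξ₂, hξ₁, hξ₁tr, hξ₂, hξ₂tr, h₁, h₂⟩⟩
    · exact absurd (h₁.symm.trans (hxy ▸ h₂)) hne
    · refine ⟨(1 - (E * ρ₁).trace.re, 1 - (E * ρ₂).trace.re),
        ⟨1 - E, ⟨sub_nonneg.mpr hEI.2, sub_le_self 1 hEI.1⟩, ?_⟩,
        (hmix (sub_nonneg.mpr hy1) (sub_lt_sub_left hxy 1) (sub_le_self 1 hx0)).mp
          ⟨ξ₂, ξ₁, hξ₂, hξ₂tr, hξ₁, hξ₁tr, ?_, ?_⟩⟩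
      · simp [Matrix.sub_mul, trace_sub, hρ₁tr, hρ₂tr]
      · push_cast
        rwa [sub_sub_cancel, add_comm]
      · push_cast
        rwa [sub_sub_cancel, add_comm]
  · rintro ⟨_, ⟨E, hEI, rfl⟩, hz⟩
    obtain ⟨hx0, hx1⟩ := re_trace_mul_mem_Icc hEI hρ₁ hρ₁tr
    obtain ⟨hy0, hy1⟩ := re_trace_mul_mem_Icc hEI hρ₂ hρ₂tr
    have hyx : (E * ρ₂).trace.re < (E * ρ₁).trace.re := by
      by_contra!
      nlinarith [hz.1, hz.2]
    obtain ⟨ξ₁, ξ₂, hξ₁, hξ₁tr, hξ₂, hξ₂tr, h₁, h₂⟩ := (hmix hy0 hyx hx1).mpr hz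
    refine ⟨E, ξ₁, ξ₂, hEI.1.posSemidef, hEI.2, hξ₁, hξ₁tr, hξ₂, hξ₂tr, ?_, ?_⟩
    · rwa [trace_mul_smul_add_trace_one_sub_mul_smul hEI.1 hρ₁ hρ₁tr]
    · rwa [trace_mul_smul_add_trace_one_sub_mul_smul hEI.1 hρ₂ hρ₂tr]

end Channel

lemma nonneg_of_forall_lt_apply_add_smul {E : Type*} [AddCommGroup E] [Module ℝ E]
    (f : E →ₗ[ℝ] ℝ) {w d : E} {v : ℝ} (h : ∀ s : ℝ, 0 ≤ s → v < f (w + s • d)) : 0 ≤ f d := by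
  by_contra! hd
  have hw : v < f w := by simpa using h 0 le_rfl
  have := h ((f w - v) / -f d) (div_nonneg (by linarith) (by linarith))
  rw [map_add, map_smul, smul_eq_mul, div_mul_eq_mul_div, div_neg, mul_div_cancel_right₀ _ hd.ne]
    at this
  linarith

/-- For the nontrivial direction, separate `T` from the wedge: a separating functional is bounded
below on the wedge, hence a positive multiple of `z ↦ z.1 - t * z.2` for some `t ∈ [m, M]`. -/
lemma exists_mem_wedge_iff {T : Set (ℝ × ℝ)} (hTc : Convex ℝ T) (hTk : IsCompact T)
    {m M a b p q : ℝ} (hmM : m ≤ M) (hpa : p - M * q = a) (hpb : p - m * q = b) :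
    (∃ z ∈ T, a ≤ z.1 - M * z.2 ∧ b ≤ z.1 - m * z.2) ↔
      ∀ t ∈ Icc m M, ∃ z ∈ T, p - t * q ≤ z.1 - t * z.2 := by
  subst hpa hpb
  constructor
  · rintro ⟨z, hz, hzM, hzm⟩ t ⟨hmt, htM⟩
    refine ⟨z, hz, ?_⟩
    rcases le_total 0 (z.2 - q) with h | h <;> nlinarith
  intro h
  by_contra hTC
  have hℓ (t : ℝ) : IsLinearMap ℝ fun z : ℝ × ℝ => z.1 - t * z.2 :=
    ⟨fun _ _ => by simp only [Prod.fst_add, Prod.snd_add]; ring,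
      fun _ _ => by simp only [Prod.smul_fst, Prod.smul_snd, smul_eq_mul]; ring⟩
  set C := {z : ℝ × ℝ | p - M * q ≤ z.1 - M * z.2} ∩ {z | p - m * q ≤ z.1 - m * z.2}
  have hCc : Convex ℝ C := (convex_halfSpace_ge (hℓ M) _).inter (convex_halfSpace_ge (hℓ m) _)
  have hCk : IsClosed C := (isClosed_le (by fun_prop) (by fun_prop)).inter
    (isClosed_le (by fun_prop) (by fun_prop))
  have hdisj : Disjoint T C :=
    Set.disjoint_left.mpr fun z hz hzC => hTC ⟨z, hz, hzC⟩
  obtain ⟨f, u, v, hfT, huv, hfC⟩ :=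
    geometric_hahn_banach_compact_closed hTc hTk hCc hCk hdisj
  have hf (z : ℝ × ℝ) : f z = z.1 * f (1, 0) + z.2 * f (0, 1) := by
    conv_lhs => rw [show z = z.1 • ((1 : ℝ), (0 : ℝ)) + z.2 • ((0 : ℝ), (1 : ℝ)) by ext <;> simp]
    rw [map_add, map_smul, map_smul, smul_eq_mul, smul_eq_mul]
  have hray (d : ℝ × ℝ) (hd : ∀ s : ℝ, 0 ≤ s → ((p, q) + s • d) ∈ C) : 0 ≤ f d :=
    nonneg_of_forall_lt_apply_add_smul (f : ℝ × ℝ →ₗ[ℝ] ℝ) fun s hs => hfC _ (hd s hs)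
  have h₁ := hray (M, 1) fun s hs => ⟨by simp; nlinarith, by simp; nlinarith⟩
  have h₂ := hray (-m, -1) fun s hs => ⟨by simp; nlinarith, by simp; nlinarith⟩
  have h₃ := hray (1, 0) fun s hs => ⟨by simpa using hs, by simpa using hs⟩
  rw [hf] at h₁ h₂ h₃
  simp only [one_mul, zero_mul, add_zero] at h₁ h₂ h₃
  obtain ⟨t, ht, hb⟩ : ∃ t ∈ Icc m M, f (0, 1) = -(t * f (1, 0)) := by
    rcases h₃.eq_or_lt with ha | ha
    · exact ⟨m, ⟨le_rfl, hmM⟩, by rw [← ha] at h₁ h₂ ⊢; linarith⟩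
    · refine ⟨-f (0, 1) / f (1, 0), ⟨?_, ?_⟩, by field_simp⟩ <;>
        [rw [le_div_iff₀ ha]; rw [div_le_iff₀ ha]] <;> linarith
  obtain ⟨z, hz, hzt⟩ := h t ht
  have hfz := hfT z hz
  have hfw := hfC (p, q) (by simp [C])
  rw [hf] at hfz hfw
  simp only [hb] at hfz hfw
  nlinarith [mul_le_mul_of_nonneg_left hzt h₃]

/-- The sum of absolute values is `‖σ₁ - t σ₂‖₁`; outside `[m, M]` it equals `|1 - t|`, which
never exceeds `N t`. -/
lemma forall_abs_add_abs_le_iff {N : ℝ → ℝ} {m M : ℝ} (hm0 : 0 ≤ m) (hm1 : m < 1) (hM1 : 1 < M)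
    (hN : ∀ t, 0 ≤ t → |1 - t| ≤ N t) :
    (∀ t, 0 ≤ t → |M * (1 - m) / (M - m) - t * ((1 - m) / (M - m))| +
        |m * (M - 1) / (M - m) - t * ((M - 1) / (M - m))| ≤ N t) ↔
      ∀ t ∈ Icc m M, 2 * (M * (1 - m) / (M - m) - t * ((1 - m) / (M - m))) - (1 - t) ≤ N t := by
  have ha : 0 < (1 - m) / (M - m) := div_pos (by linarith) (by linarith)
  have hb : 0 < (M - 1) / (M - m) := div_pos (by linarith) (by linarith)
  have hp (t : ℝ) : M * (1 - m) / (M - m) - t * ((1 - m) / (M - m)) =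
      (M - t) * ((1 - m) / (M - m)) := by ring
  have hq (t : ℝ) : m * (M - 1) / (M - m) - t * ((M - 1) / (M - m)) =
      (m - t) * ((M - 1) / (M - m)) := by ring
  have hsum (t : ℝ) : (M - t) * ((1 - m) / (M - m)) + (m - t) * ((M - 1) / (M - m)) = 1 - t := by
    field_simp [(by linarith : M - m ≠ 0)]
    ring
  simp only [hp, hq]
  constructor
  · rintro h t ⟨hmt, -⟩
    linarith [h t (hm0.trans hmt), hsum t, le_abs_self ((M - t) * ((1 - m) / (M - m))),
      neg_abs_le ((m - t) * ((M - 1) / (M - m)))]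
  · intro h t ht
    rcases lt_or_ge t m with htm | hmt
    · rw [abs_of_nonneg (by nlinarith), abs_of_nonneg (by nlinarith)]
      linarith [hsum t, le_abs_self (1 - t), hN t ht]
    rcases le_or_gt t M with htM | hMt
    · rw [abs_of_nonneg (by nlinarith), abs_of_nonpos (by nlinarith)]
      linarith [h t ⟨hmt, htM⟩, hsum t]
    · rw [abs_of_nonpos (by nlinarith), abs_of_nonpos (by nlinarith)]
      linarith [hsum t, neg_abs_le (1 - t), hN t ht]

/-- Theorem 4 of the paper: with `M' = sup(ρ₁'/ρ₂')`, `m' = inf(ρ₁'/ρ₂')` and the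
two-dimensional diagonal density matrices
`σ₁ = diag(M'(1-m'), m'(M'-1))/(M'-m')`, `σ₂ = diag(1-m', M'-1)/(M'-m')`,
a test-and-prepare channel `ℰ(ρ) = Tr[Eρ]ξ₁ + Tr[(𝟙-E)ρ]ξ₂` with `ℰ(ρ₁) = ρ₁'` and
`ℰ(ρ₂) = ρ₂'` exists if and only if `‖ρ₁ - tρ₂‖₁ ≥ ‖σ₁ - tσ₂‖₁` for all `t ≥ 0`. -/
theorem test_and_prepare_iff_lorenz
    {n m : ℕ} (ρ₁ ρ₂ : Matrix (Fin n) (Fin n) ℂ) (ρ₁' ρ₂' : Matrix (Fin m) (Fin m) ℂ)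
    (hρ₁ : ρ₁.PosSemidef) (hρ₁tr : ρ₁.trace = 1)
    (hρ₂ : ρ₂.PosSemidef) (hρ₂tr : ρ₂.trace = 1)
    (hρ₁' : ρ₁'.PosSemidef) (hρ₁'tr : ρ₁'.trace = 1)
    (hρ₂' : ρ₂'.PosSemidef) (hρ₂'tr : ρ₂'.trace = 1)
    (hne : ρ₁' ≠ ρ₂')
    (hsupp : LinearMap.range (Matrix.toLin' ρ₁') ≤ LinearMap.range (Matrix.toLin' ρ₂'))
    (M' m' : ℝ) (hM' : M' = supRatio ρ₁' ρ₂') (hm' : m' = infRatio ρ₁' ρ₂')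
    (σ₁ σ₂ : Matrix (Fin 2) (Fin 2) ℂ)
    (hσ₁ : σ₁ = Matrix.diagonal
      ![((M' * (1 - m') / (M' - m') : ℝ) : ℂ), ((m' * (M' - 1) / (M' - m') : ℝ) : ℂ)])
    (hσ₂ : σ₂ = Matrix.diagonal
      ![(((1 - m') / (M' - m') : ℝ) : ℂ), (((M' - 1) / (M' - m') : ℝ) : ℂ)]) :
    (∃ (E : Matrix (Fin n) (Fin n) ℂ) (ξ₁ ξ₂ : Matrix (Fin m) (Fin m) ℂ),
        E.PosSemidef ∧ ((1 : Matrix (Fin n) (Fin n) ℂ) - E).PosSemidef ∧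
        ξ₁.PosSemidef ∧ ξ₁.trace = 1 ∧ ξ₂.PosSemidef ∧ ξ₂.trace = 1 ∧
        (E * ρ₁).trace • ξ₁ + (((1 : Matrix (Fin n) (Fin n) ℂ) - E) * ρ₁).trace • ξ₂ = ρ₁' ∧
        (E * ρ₂).trace • ξ₁ + (((1 : Matrix (Fin n) (Fin n) ℂ) - E) * ρ₂).trace • ξ₂ = ρ₂') ↔
      (∀ t : ℝ, 0 ≤ t →
        traceNorm (σ₁ - (t : ℂ) • σ₂) ≤ traceNorm (ρ₁ - (t : ℂ) • ρ₂)) := by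
  have hM := isLeast_supRatio hρ₁' hρ₁'tr hρ₂' hρ₂'tr hsupp
  have hm := isGreatest_infRatio hρ₁' hρ₁'tr hρ₂'tr
  rw [← hM'] at hM
  rw [← hm'] at hm
  have hm0 : 0 ≤ m' := hm.2 (by simpa using hρ₁')
  have hm1 := lt_one_of_isGreatest hm hρ₁'tr hρ₂'tr hne
  have hM1 := one_lt_of_isLeast hM hρ₁'tr hρ₂'tr hne
  have hN (t : ℝ) : |1 - t| ≤ traceNorm (ρ₁ - (t : ℂ) • ρ₂) := by
    simpa [trace_sub, trace_smul, hρ₁tr, hρ₂tr] using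
      abs_re_trace_le_traceNorm (hρ₁.1.sub (hρ₂.1.smul (Complex.conj_ofReal t)))
  calc _ ↔ ∃ z ∈ testingRegion ρ₁ ρ₂, 0 ≤ z.1 - M' * z.2 ∧ 1 - m' ≤ z.1 - m' * z.2 :=
        exists_testAndPrepare_iff_exists_mem_testingRegion hρ₁ hρ₁tr hρ₂ hρ₂tr hρ₁'tr hρ₂'
          hρ₂'tr hne hM hm
    _ ↔ ∀ t ∈ Icc m' M', ∃ z ∈ testingRegion ρ₁ ρ₂,
          M' * (1 - m') / (M' - m') - t * ((1 - m') / (M' - m')) ≤ z.1 - t * z.2 :=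
        exists_mem_wedge_iff (convex_testingRegion ρ₁ ρ₂) (isCompact_testingRegion ρ₁ ρ₂)
          (by linarith) (by ring) (by field_simp [(by linarith : M' - m' ≠ 0)])
    _ ↔ ∀ t ∈ Icc m' M', 2 * (M' * (1 - m') / (M' - m') - t * ((1 - m') / (M' - m'))) -
          (1 - t) ≤ traceNorm (ρ₁ - (t : ℂ) • ρ₂) := by
        simp only [exists_mem_testingRegion_le_iff hρ₁.1 hρ₁tr hρ₂.1 hρ₂tr]
    _ ↔ _ := by
        rw [← forall_abs_add_abs_le_iff hm0 hm1 hM1 fun t _ => hN t]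
        simp only [hσ₁, hσ₂, traceNorm_diagonal_sub_smul_diagonal]
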